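/- arXiv:2604.00140 — 2 statements merged into one kernel-verified Lean document; each statement's English description precedes it below -/
import Mathlib

section
/- Let F and S be disjoint finite index sets, let Δt > 0, and on a probability space let (ΔW_i)_{i ∈ F ∪ S} be independent real random variables, each with the centered Gaussian distribution N(0, Δt). For each k ∈ F ∪ S let C_k ∈ ℝ^{N_s} and let v_k : ℝ^{N_s} → ℝ be differentiable at a point s with v_k(s) > 0, and set X_k(x) = √(v_k(x)) · C_k. Then the leading fast–slow splitting error term satisfies E[ ‖ (1/2) Σ_{i ∈ F} Σ_{j ∈ S} ΔW_i ΔW_j [X_i, X_j](s) ‖² ] = (1/4)·Δt² · Σ_{i ∈ F} Σ_{j ∈ S} ‖ (1/2)√(v_i(s)/v_j(s))⟨∇v_j(s), C_i⟩ C_j − (1/2)√(v_j(s)/v_i(s))⟨∇v_i(s), C_j⟩ C_i ‖². -/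
open MeasureTheory ProbabilityTheory Real Set
open scoped NNReal ENNReal

namespace CLEAux

variable {v : NNReal}

lemma pdf_form (v : NNReal) : gaussianPDFReal 0 v =
    fun x => (Real.sqrt (2 * π * v))⁻¹ * Real.exp (-((2 * (v : ℝ))⁻¹ * x ^ 2)) := by
  rw [gaussianPDFReal_def]
  funext x
  have h : -(x - 0) ^ 2 / (2 * (v : ℝ)) = -((2 * (v : ℝ))⁻¹ * x ^ 2) := by ring
  rw [h]

lemma vcoe_pos (hv : v ≠ 0) : 0 < (v : ℝ) :=
  NNReal.coe_pos.mpr (pos_iff_ne_zero.mpr hv)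

lemma rpow_two_eq (y : ℝ) : y ^ (2 : ℝ) = y ^ (2 : ℕ) := by norm_num

lemma gaussianReal_eq_withDensity (hv : v ≠ 0) :
    gaussianReal 0 v
      = (volume : Measure ℝ).withDensity
          (fun x => (((gaussianPDFReal 0 v x).toNNReal : ℝ≥0) : ℝ≥0∞)) := by
  rw [gaussianReal_of_var_ne_zero 0 hv]
  rfl

lemma meas_toNNReal_pdf (v : NNReal) :
    Measurable fun x => (gaussianPDFReal 0 v x).toNNReal :=
  (measurable_gaussianPDFReal 0 v).real_toNNReal

lemma smul_form (g : ℝ → ℝ) :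
    (fun x => ((gaussianPDFReal 0 v x).toNNReal : ℝ≥0) • g x)
      = fun x => gaussianPDFReal 0 v x * g x := by
  funext x
  simp [NNReal.smul_def, Real.coe_toNNReal _ (gaussianPDFReal_nonneg 0 v x)]

lemma integral_gaussianReal_eq (hv : v ≠ 0) (g : ℝ → ℝ) :
    ∫ x, g x ∂(gaussianReal 0 v) = ∫ x, gaussianPDFReal 0 v x * g x := by
  rw [gaussianReal_eq_withDensity hv,
    integral_withDensity_eq_integral_smul (meas_toNNReal_pdf v), smul_form]

lemma integrable_gaussianReal_iff (hv : v ≠ 0) (g : ℝ → ℝ) :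
    Integrable g (gaussianReal 0 v) ↔ Integrable (fun x => gaussianPDFReal 0 v x * g x) := by
  rw [gaussianReal_eq_withDensity hv,
    integrable_withDensity_iff_integrable_smul (meas_toNNReal_pdf v), smul_form]

lemma integrable_pdf_mul_id (hv : v ≠ 0) :
    Integrable (fun x => gaussianPDFReal 0 v x * x) := by
  have h := vcoe_pos hv
  have hb : 0 < (2 * (v : ℝ))⁻¹ := by positivity
  have H := (integrable_mul_exp_neg_mul_sq hb).const_mul (Real.sqrt (2 * π * v))⁻¹
  refine H.congr (Filter.Eventually.of_forall fun x => ?_)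
  rw [pdf_form]
  ring

lemma integrable_pdf_mul_sq (hv : v ≠ 0) :
    Integrable (fun x => gaussianPDFReal 0 v x * x ^ 2) := by
  have h := vcoe_pos hv
  have hb : 0 < (2 * (v : ℝ))⁻¹ := by positivity
  have H := (integrable_rpow_mul_exp_neg_mul_sq hb (s := 2) (by norm_num)).const_mul
      (Real.sqrt (2 * π * v))⁻¹
  refine H.congr (Filter.Eventually.of_forall fun x => ?_)
  simp only [pdf_form, rpow_two_eq]
  ring

lemma integral_odd_eq_zero (f : ℝ → ℝ) (hf : ∀ x, f (-x) = -f x) :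
    ∫ x, f x = 0 := by
  have h1 : ∫ x, f x = ∫ x, f (-x) := by
    conv_lhs => rw [← Measure.map_neg_eq_self (volume : Measure ℝ)]
    exact MeasureTheory.integral_map_equiv (MeasurableEquiv.neg ℝ) f
  simp only [hf, integral_neg] at h1
  linarith

lemma integral_pdf_mul_id (v : NNReal) :
    ∫ x, gaussianPDFReal 0 v x * x = 0 := by
  apply integral_odd_eq_zero
  intro x
  rw [pdf_form]
  simp only [mul_pow, neg_mul, neg_neg, mul_neg]
  ring_nf

lemma integral_sq_exp {b : ℝ} (hb : 0 < (b : ℝ)) :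
    ∫ x, x ^ 2 * Real.exp (-(b * x ^ 2)) = b ^ (-(3 : ℝ) / 2) * Real.Gamma (3 / 2) := by
  have heq : (fun x : ℝ => x ^ 2 * Real.exp (-(b * x ^ 2)))
      = fun x : ℝ => |x| ^ 2 * Real.exp (-(b * |x| ^ 2)) := by
    funext x; rw [sq_abs]
  rw [heq, integral_comp_abs (f := fun x : ℝ => x ^ 2 * Real.exp (-(b * x ^ 2)))]
  have h2 : ∫ x in Ioi (0:ℝ), x ^ 2 * Real.exp (-(b * x ^ 2))
      = ∫ x in Ioi (0:ℝ), x ^ (2:ℝ) * Real.exp (-b * x ^ (2:ℝ)) := by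
    refine setIntegral_congr_fun measurableSet_Ioi fun x hx => ?_
    rw [rpow_two_eq]; ring_nf
  rw [h2, integral_rpow_mul_exp_neg_mul_rpow (by norm_num) (by norm_num) hb]
  norm_num
  ring

lemma Gamma_three_half : Real.Gamma (3 / 2) = Real.sqrt π / 2 := by
  have h : (3 / 2 : ℝ) = 1 / 2 + 1 := by norm_num
  rw [h, Real.Gamma_add_one (by norm_num), Real.Gamma_one_half_eq]
  ring

lemma integral_pdf_mul_sq (hv : v ≠ 0) :
    ∫ x, gaussianPDFReal 0 v x * x ^ 2 = (v : ℝ) := by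
  have h := vcoe_pos hv
  have hb : 0 < (2 * (v : ℝ))⁻¹ := by positivity
  have h1 : (fun x => gaussianPDFReal 0 v x * x ^ 2)
      = fun x => (Real.sqrt (2 * π * v))⁻¹ * (x ^ 2 * Real.exp (-((2 * (v : ℝ))⁻¹ * x ^ 2))) := by
    funext x; rw [pdf_form]; ring
  rw [h1, integral_const_mul, integral_sq_exp hb, Gamma_three_half]
  have h2v : (0:ℝ) < 2 * (v : ℝ) := by positivity
  have hpow : ((2 * (v : ℝ))⁻¹) ^ (-(3:ℝ)/2) = (2 * (v : ℝ)) ^ ((3:ℝ)/2) := by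
    rw [Real.inv_rpow h2v.le, ← Real.rpow_neg h2v.le, neg_div, neg_neg]
  rw [hpow]
  have hsplit : (2 * (v : ℝ)) ^ ((3:ℝ)/2) = (2 * (v : ℝ)) * Real.sqrt (2 * (v : ℝ)) := by
    rw [show (3:ℝ)/2 = 1 + 1/2 by norm_num, Real.rpow_add h2v, Real.rpow_one,
      ← Real.sqrt_eq_rpow]
  have hsqrt : Real.sqrt (2 * π * (v : ℝ)) = Real.sqrt (2 * (v : ℝ)) * Real.sqrt π := by
    rw [← Real.sqrt_mul (by positivity)]
    ring_nf
  rw [hsplit, hsqrt]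
  have hs1 : Real.sqrt (2 * (v : ℝ)) ≠ 0 := by positivity
  have hs2 : Real.sqrt π ≠ 0 := by positivity
  field_simp

-- moments of gaussianReal
lemma integrable_id_gaussianReal (hv : v ≠ 0) :
    Integrable (fun x : ℝ => x) (gaussianReal 0 v) :=
  (integrable_gaussianReal_iff hv _).mpr (integrable_pdf_mul_id hv)

lemma integrable_sq_gaussianReal (hv : v ≠ 0) :
    Integrable (fun x : ℝ => x ^ 2) (gaussianReal 0 v) :=
  (integrable_gaussianReal_iff hv _).mpr (integrable_pdf_mul_sq hv)

lemma integral_id_gaussianReal (hv : v ≠ 0) :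
    ∫ x, x ∂(gaussianReal 0 v) = 0 := by
  rw [integral_gaussianReal_eq hv]
  exact integral_pdf_mul_id v

lemma integral_sq_gaussianReal (hv : v ≠ 0) :
    ∫ x, x ^ 2 ∂(gaussianReal 0 v) = (v : ℝ) := by
  rw [integral_gaussianReal_eq hv]
  exact integral_pdf_mul_sq hv

end CLEAux


open MeasureTheory ProbabilityTheory

/-- **Leading fast-slow splitting error term of the CLE.** -/
theorem fast_slow_splitting_error_leading_term {Ω ι : Type*} [DecidableEq ι]
    [MeasurableSpace Ω] (μ : Measure Ω) [IsProbabilityMeasure μ]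
    (F S : Finset ι) (hFS : Disjoint F S)
    (Δt : NNReal) (hΔt : 0 < Δt)
    (W : ι → Ω → ℝ) (hmeas : ∀ i, Measurable (W i))
    (hindep : iIndepFun (fun i : ↥(F ∪ S) => W ↑i) μ)
    (hgauss : ∀ i ∈ F ∪ S, μ.map (W i) = gaussianReal 0 Δt)
    {Ns : ℕ} (C : ι → EuclideanSpace ℝ (Fin Ns))
    (v : ι → EuclideanSpace ℝ (Fin Ns) → ℝ)
    (s : EuclideanSpace ℝ (Fin Ns))
    (hv : ∀ k ∈ F ∪ S, DifferentiableAt ℝ (v k) s)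
    (hpos : ∀ k ∈ F ∪ S, 0 < v k s)
    (X : ι → EuclideanSpace ℝ (Fin Ns) → EuclideanSpace ℝ (Fin Ns))
    (hX : ∀ k x, X k x = Real.sqrt (v k x) • C k) :
    ∫ ω, ‖(1/2 : ℝ) • ∑ i ∈ F, ∑ j ∈ S, (W i ω * W j ω) •
            (fderiv ℝ (X j) s (X i s) - fderiv ℝ (X i) s (X j s))‖ ^ 2 ∂μ
      = (1/4 : ℝ) * (Δt : ℝ) ^ 2 * ∑ i ∈ F, ∑ j ∈ S,
          ‖((1/2 : ℝ) * Real.sqrt (v i s / v j s) * (inner ℝ (gradient (v j) s) (C i) : ℝ)) • C j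
            - ((1/2 : ℝ) * Real.sqrt (v j s / v i s) * (inner ℝ (gradient (v i) s) (C j) : ℝ)) • C i‖ ^ 2 := by
  classical
  have hΔ0 : Δt ≠ 0 := hΔt.ne'
  have memF : ∀ {a : ι}, a ∈ F → a ∈ F ∪ S := fun ha => Finset.mem_union_left _ ha
  have memS : ∀ {a : ι}, a ∈ S → a ∈ F ∪ S := fun ha => Finset.mem_union_right _ ha
  -- basic integrability and moments of the W's
  have IW1 : ∀ a ∈ F ∪ S, Integrable (W a) μ := by
    intro a ha
    have h := CLEAux.integrable_id_gaussianReal hΔ0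
    rw [← hgauss a ha] at h
    exact (integrable_map_measure aestronglyMeasurable_id (hmeas a).aemeasurable).mp h
  have IW2 : ∀ a ∈ F ∪ S, Integrable (fun ω => W a ω ^ 2) μ := by
    intro a ha
    have h := CLEAux.integrable_sq_gaussianReal hΔ0
    rw [← hgauss a ha] at h
    exact (integrable_map_measure (measurable_id.pow_const 2).aestronglyMeasurable
      (hmeas a).aemeasurable).mp h
  have EW1 : ∀ a ∈ F ∪ S, ∫ ω, W a ω ∂μ = 0 := by
    intro a ha
    have h : ∫ x, (fun y : ℝ => y) x ∂(μ.map (W a)) = ∫ ω, W a ω ∂μ :=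
      integral_map (hmeas a).aemeasurable aestronglyMeasurable_id
    rw [← h, hgauss a ha]
    exact CLEAux.integral_id_gaussianReal hΔ0
  have EW2 : ∀ a ∈ F ∪ S, ∫ ω, W a ω ^ 2 ∂μ = (Δt : ℝ) := by
    intro a ha
    have h : ∫ x, (fun y : ℝ => y ^ 2) x ∂(μ.map (W a)) = ∫ ω, W a ω ^ 2 ∂μ :=
      integral_map (hmeas a).aemeasurable (measurable_id.pow_const 2).aestronglyMeasurable
    rw [← h, hgauss a ha]
    exact CLEAux.integral_sq_gaussianReal hΔ0
  -- subtype inequality helper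
  have hne : ∀ {a b : ι} (ha : a ∈ F ∪ S) (hb : b ∈ F ∪ S), a ≠ b →
      (⟨a, ha⟩ : ↥(F ∪ S)) ≠ ⟨b, hb⟩ :=
    fun _ _ hab h => hab (congrArg Subtype.val h)
  have hIndep2 : ∀ {a b : ι} (_ : a ∈ F ∪ S) (_ : b ∈ F ∪ S), a ≠ b →
      IndepFun (W a) (W b) μ := by
    intro a b ha hb hab
    exact hindep.indepFun (hne ha hb hab)
  have Ipair : ∀ {a b : ι} (_ : a ∈ F ∪ S) (_ : b ∈ F ∪ S),
      Integrable (fun ω => W a ω * W b ω) μ := by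
    intro a b ha hb
    by_cases hab : a = b
    · subst hab
      exact (IW2 a ha).congr (Filter.Eventually.of_forall fun ω => (sq (W a ω)))
    · exact (hIndep2 ha hb hab).integrable_mul (IW1 a ha) (IW1 b hb)
  have Epair : ∀ {a b : ι} (_ : a ∈ F ∪ S) (_ : b ∈ F ∪ S),
      ∫ ω, W a ω * W b ω ∂μ = if a = b then (Δt : ℝ) else 0 := by
    intro a b ha hb
    by_cases hab : a = b
    · subst hab
      rw [if_pos rfl, ← EW2 a ha]
      exact integral_congr_ae (Filter.Eventually.of_forall fun ω => (sq (W a ω)).symm)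
    · rw [if_neg hab,
        (show ∫ ω, W a ω * W b ω ∂μ = (∫ ω, W a ω ∂μ) * ∫ ω, W b ω ∂μ from
          (hIndep2 ha hb hab).integral_mul_eq_mul_integral (hmeas a).aestronglyMeasurable
          (hmeas b).aestronglyMeasurable),
        EW1 a ha, zero_mul]
  -- disjointness
  have hdisj : ∀ {a b : ι}, a ∈ F → b ∈ S → a ≠ b := by
    intro a b ha hb h
    exact (Finset.disjoint_left.mp hFS ha) (h ▸ hb)
  have hquadIndep : ∀ {i k j l : ι} (_ : i ∈ F) (_ : k ∈ F) (_ : j ∈ S) (_ : l ∈ S),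
      IndepFun (fun ω => W i ω * W k ω) (fun ω => W j ω * W l ω) μ := by
    intro i k j l hi hk hj hl
    exact hindep.indepFun_mul_mul (fun n => hmeas ↑n)
      ⟨i, memF hi⟩ ⟨k, memF hk⟩ ⟨j, memS hj⟩ ⟨l, memS hl⟩
      (hne _ _ (hdisj hi hj)) (hne _ _ (hdisj hi hl))
      (hne _ _ (hdisj hk hj)) (hne _ _ (hdisj hk hl))
  have Iquad : ∀ {i k j l : ι} (_ : i ∈ F) (_ : k ∈ F) (_ : j ∈ S) (_ : l ∈ S),
      Integrable (fun ω => (W i ω * W j ω) * (W k ω * W l ω)) μ := by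
    intro i k j l hi hk hj hl
    have h := (hquadIndep hi hk hj hl).integrable_mul
      (Ipair (memF hi) (memF hk)) (Ipair (memS hj) (memS hl))
    exact h.congr (Filter.Eventually.of_forall fun ω => by
      simp only [Pi.mul_apply]; ring)
  have Equad : ∀ {i k j l : ι} (_ : i ∈ F) (_ : k ∈ F) (_ : j ∈ S) (_ : l ∈ S),
      ∫ ω, (W i ω * W j ω) * (W k ω * W l ω) ∂μ
        = (if i = k then (Δt : ℝ) else 0) * (if j = l then (Δt : ℝ) else 0) := by
    intro i k j l hi hk hj hl
    have h0 : ∫ ω, (W i ω * W j ω) * (W k ω * W l ω) ∂μ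
        = ∫ ω, (W i ω * W k ω) * (W j ω * W l ω) ∂μ :=
      integral_congr_ae (Filter.Eventually.of_forall fun ω => by ring)
    rw [h0,
      (show ∫ ω, (W i ω * W k ω) * (W j ω * W l ω) ∂μ
          = (∫ ω, W i ω * W k ω ∂μ) * ∫ ω, W j ω * W l ω ∂μ from
      (hquadIndep hi hk hj hl).integral_mul_eq_mul_integral ((hmeas i).mul (hmeas k)).aestronglyMeasurable
        ((hmeas j).mul (hmeas l)).aestronglyMeasurable),
      Epair (memF hi) (memF hk), Epair (memS hj) (memS hl)]
  -- the bracket vectors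
  set B : ι → ι → EuclideanSpace ℝ (Fin Ns) :=
    fun i j => fderiv ℝ (X j) s (X i s) - fderiv ℝ (X i) s (X j s) with hBdef
  set T : ι → ι → EuclideanSpace ℝ (Fin Ns) :=
    fun i j => ((1/2 : ℝ) * Real.sqrt (v i s / v j s) * (inner ℝ (gradient (v j) s) (C i) : ℝ)) • C j
      - ((1/2 : ℝ) * Real.sqrt (v j s / v i s) * (inner ℝ (gradient (v i) s) (C j) : ℝ)) • C i
    with hTdef
  show ∫ ω, ‖(1/2 : ℝ) • ∑ i ∈ F, ∑ j ∈ S, (W i ω * W j ω) • B i j‖ ^ 2 ∂μ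
      = (1/4 : ℝ) * (Δt : ℝ) ^ 2 * ∑ i ∈ F, ∑ j ∈ S, ‖T i j‖ ^ 2
  -- fderiv computation
  have hXfun : ∀ k, X k = fun x => Real.sqrt (v k x) • C k := fun k => funext fun x => hX k x
  have hfderiv : ∀ k ∈ F ∪ S, ∀ u, fderiv ℝ (X k) s u
      = ((1 / (2 * Real.sqrt (v k s))) * (inner ℝ (gradient (v k) s) u : ℝ)) • C k := by
    intro k hk u
    rw [hXfun k]
    have h2 : HasFDerivAt (fun x => Real.sqrt (v k x))
        ((1 / (2 * Real.sqrt (v k s))) • fderiv ℝ (v k) s) s :=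
      (Real.hasDerivAt_sqrt (hpos k hk).ne').comp_hasFDerivAt s (hv k hk).hasFDerivAt
    have h3 := h2.smul_const (C k)
    rw [h3.fderiv, ContinuousLinearMap.smulRight_apply, ContinuousLinearMap.smul_apply]
    have h4 : fderiv ℝ (v k) s u = (inner ℝ (gradient (v k) s) u : ℝ) := by
      rw [gradient, InnerProductSpace.toDual_symm_apply]
    rw [h4]
    simp [smul_smul]
  have hBT : ∀ i ∈ F, ∀ j ∈ S, B i j = T i j := by
    intro i hi j hj
    have hi' := memF hi; have hj' := memS hj
    have hsi := Real.sqrt_pos.mpr (hpos i hi')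
    have hsj := Real.sqrt_pos.mpr (hpos j hj')
    rw [hBdef, hTdef]
    simp only
    rw [hfderiv j hj' (X i s), hfderiv i hi' (X j s), hX i s, hX j s,
      real_inner_smul_right, real_inner_smul_right]
    have c1 : ∀ r : ℝ, 1 / (2 * Real.sqrt (v j s)) * (Real.sqrt (v i s) * r)
        = 1/2 * Real.sqrt (v i s / v j s) * r := by
      intro r
      rw [Real.sqrt_div (hpos i hi').le]
      field_simp
    have c2 : ∀ r : ℝ, 1 / (2 * Real.sqrt (v i s)) * (Real.sqrt (v j s) * r)
        = 1/2 * Real.sqrt (v j s / v i s) * r := by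
      intro r
      rw [Real.sqrt_div (hpos j hj').le]
      field_simp
    rw [c1, c2]
  -- pointwise expansion of the squared norm
  have hpt : ∀ ω, ‖(1/2 : ℝ) • ∑ i ∈ F, ∑ j ∈ S, (W i ω * W j ω) • B i j‖ ^ 2
      = (1/4 : ℝ) * ∑ i ∈ F, ∑ j ∈ S, ∑ k ∈ F, ∑ l ∈ S,
          ((W i ω * W j ω) * (W k ω * W l ω)) * (inner ℝ (B i j) (B k l) : ℝ) := by
    intro ω
    rw [norm_smul, mul_pow]
    have hn : ‖(1/2 : ℝ)‖ ^ 2 = (1/4 : ℝ) := by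
      rw [Real.norm_eq_abs]; norm_num
    rw [hn]
    congr 1
    rw [← real_inner_self_eq_norm_sq]
    rw [sum_inner]
    refine Finset.sum_congr rfl fun i hi => ?_
    rw [sum_inner]
    refine Finset.sum_congr rfl fun j hj => ?_
    rw [real_inner_smul_left, inner_sum, Finset.mul_sum]
    refine Finset.sum_congr rfl fun k hk => ?_
    rw [inner_sum, Finset.mul_sum]
    refine Finset.sum_congr rfl fun l hl => ?_
    rw [real_inner_smul_right]
    ring
  calc ∫ ω, ‖(1/2 : ℝ) • ∑ i ∈ F, ∑ j ∈ S, (W i ω * W j ω) • B i j‖ ^ 2 ∂μ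
      = ∫ ω, (1/4 : ℝ) * ∑ i ∈ F, ∑ j ∈ S, ∑ k ∈ F, ∑ l ∈ S,
          ((W i ω * W j ω) * (W k ω * W l ω)) * (inner ℝ (B i j) (B k l) : ℝ) ∂μ :=
        integral_congr_ae (Filter.Eventually.of_forall hpt)
    _ = (1/4 : ℝ) * ∑ i ∈ F, ∑ j ∈ S, ∑ k ∈ F, ∑ l ∈ S,
          (∫ ω, (W i ω * W j ω) * (W k ω * W l ω) ∂μ) * (inner ℝ (B i j) (B k l) : ℝ) := by
        rw [integral_const_mul]
        congr 1
        rw [integral_finset_sum _ (fun i hi => integrable_finset_sum _ (fun j hj =>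
          integrable_finset_sum _ (fun k hk => integrable_finset_sum _ (fun l hl =>
          (Iquad hi hk hj hl).mul_const _))))]
        refine Finset.sum_congr rfl fun i hi => ?_
        rw [integral_finset_sum _ (fun j hj => integrable_finset_sum _ (fun k hk =>
          integrable_finset_sum _ (fun l hl => (Iquad hi hk hj hl).mul_const _)))]
        refine Finset.sum_congr rfl fun j hj => ?_
        rw [integral_finset_sum _ (fun k hk => integrable_finset_sum _ (fun l hl =>
          (Iquad hi hk hj hl).mul_const _))]
        refine Finset.sum_congr rfl fun k hk => ?_
        rw [integral_finset_sum _ (fun l hl => (Iquad hi hk hj hl).mul_const _)]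
        refine Finset.sum_congr rfl fun l hl => ?_
        exact integral_mul_const _ _
    _ = (1/4 : ℝ) * ∑ i ∈ F, ∑ j ∈ S, ∑ k ∈ F, ∑ l ∈ S,
          ((if i = k then (Δt : ℝ) else 0) * (if j = l then (Δt : ℝ) else 0))
            * (inner ℝ (B i j) (B k l) : ℝ) := by
        congr 1
        refine Finset.sum_congr rfl fun i hi => Finset.sum_congr rfl fun j hj =>
          Finset.sum_congr rfl fun k hk => Finset.sum_congr rfl fun l hl => ?_
        rw [Equad hi hk hj hl]
    _ = (1/4 : ℝ) * ∑ i ∈ F, ∑ j ∈ S, (Δt : ℝ) ^ 2 * (inner ℝ (B i j) (B i j) : ℝ) := by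
        congr 1
        refine Finset.sum_congr rfl fun i hi => Finset.sum_congr rfl fun j hj => ?_
        have hstep : ∀ k ∈ F, (∑ l ∈ S, ((if i = k then (Δt : ℝ) else 0)
            * (if j = l then (Δt : ℝ) else 0)) * (inner ℝ (B i j) (B k l) : ℝ))
            = if i = k then (∑ l ∈ S, if j = l
                then ((Δt : ℝ) * (Δt : ℝ)) * (inner ℝ (B i j) (B k l) : ℝ) else 0) else 0 := by
          intro k hk
          by_cases hik : i = k
          · simp only [if_pos hik]
            refine Finset.sum_congr rfl fun l hl => ?_
            by_cases hjl : j = l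
            · simp only [if_pos hjl]
            · simp [hjl]
          · simp [hik]
        rw [Finset.sum_congr rfl hstep, Finset.sum_ite_eq F i, if_pos hi,
          Finset.sum_ite_eq S j, if_pos hj, sq]
    _ = (1/4 : ℝ) * (Δt : ℝ) ^ 2 * ∑ i ∈ F, ∑ j ∈ S, ‖T i j‖ ^ 2 := by
        rw [mul_assoc]
        congr 1
        rw [Finset.mul_sum]
        refine Finset.sum_congr rfl fun i hi => ?_
        rw [Finset.mul_sum]
        refine Finset.sum_congr rfl fun j hj => ?_
        rw [hBT i hi j hj, real_inner_self_eq_norm_sq]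
end

section
/- Let E be a real Banach space, let A : E → E be Lipschitz with constant L > 0, let u ∈ E, and let f : ℝ → E satisfy f(0) = u and have derivative A(f(t)) at every t ∈ [0,1]. Then the frozen-field (explicit Euler) one-step defect satisfies ‖f(1) − u − A(u)‖ ≤ ‖A(u)‖ · (exp(L) − 1 − L)/L. -/
/-- **Frozen-field (explicit Euler) one-step defect bound.**
If `A : E → E` is Lipschitz with constant `L > 0` and `f` solves `f' = A ∘ f` on `[0,1]`
with `f 0 = u`, then `‖f 1 − u − A u‖ ≤ ‖A u‖ · (exp L − 1 − L)/L`. -/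
theorem euler_one_step_defect_bound {E : Type*} [NormedAddCommGroup E] [NormedSpace ℝ E]
    [CompleteSpace E]
    (A : E → E) (L : NNReal) (hL : 0 < L) (hlip : LipschitzWith L A)
    (u : E) (f : ℝ → E) (hf0 : f 0 = u)
    (hf : ∀ t ∈ Set.Icc (0:ℝ) 1, HasDerivAt f (A (f t)) t) :
    ‖f 1 - u - A u‖ ≤ ‖A u‖ * (Real.exp L - 1 - L) / L := by
  have hLpos : (0:ℝ) < L := hL
  have hLne : (L:ℝ) ≠ 0 := ne_of_gt hLpos
  have hfc : ContinuousOn f (Set.Icc (0:ℝ) 1) :=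
    fun t ht => ((hf t ht).continuousAt).continuousWithinAt
  have hlipn : ∀ t, ‖A (f t) - A u‖ ≤ L * ‖f t - u‖ := by
    intro t
    have := hlip.dist_le_mul (f t) u
    rwa [dist_eq_norm, dist_eq_norm] at this
  -- Grönwall bound for f t - u
  have hg : ∀ t ∈ Set.Icc (0:ℝ) 1, ‖f t - u‖ ≤ ‖A u‖ / L * (Real.exp (L * t) - 1) := by
    have H := norm_le_gronwallBound_of_norm_deriv_right_le (f := fun t => f t - u)
      (f' := fun t => A (f t)) (δ := 0) (K := L) (ε := ‖A u‖) (a := 0) (b := 1)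
      (hfc.sub continuousOn_const)
      (fun x hx => ((hf x (Set.Ico_subset_Icc_self hx)).sub_const u).hasDerivWithinAt)
      (by simp [hf0])
      (fun x hx => by
        have h1 := hlipn x
        have h2 := norm_sub_norm_le (A (f x)) (A u)
        linarith)
    intro t ht
    simpa [gronwallBound_of_K_ne_0 hLne] using H t ht
  -- derivative of h(t) = f t - u - t • A u
  have hderiv : ∀ t ∈ Set.Icc (0:ℝ) 1,
      HasDerivAt (fun t => f t - u - t • A u) (A (f t) - A u) t := by
    intro t ht
    have h := ((hf t ht).sub_const u).sub ((hasDerivAt_id t).smul_const (A u))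
    simp only [one_smul] at h
    exact h
  have hcont : ContinuousOn (fun t => A (f t) - A u) (Set.uIcc (0:ℝ) 1) := by
    rw [Set.uIcc_of_le zero_le_one]
    exact (hlip.continuous.comp_continuousOn hfc).sub continuousOn_const
  have hint : IntervalIntegrable (fun t => A (f t) - A u) MeasureTheory.volume 0 1 :=
    hcont.intervalIntegrable
  have key : f 1 - u - A u = ∫ t in (0:ℝ)..1, (A (f t) - A u) := by
    have h := intervalIntegral.integral_eq_sub_of_hasDerivAt
      (f := fun t => f t - u - t • A u) (f' := fun t => A (f t) - A u)
      (fun t ht => hderiv t (by rwa [Set.uIcc_of_le zero_le_one] at ht)) hint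
    rw [h]
    simp [hf0]
  rw [key]
  have hb : ∀ t ∈ Set.Icc (0:ℝ) 1, ‖A (f t) - A u‖ ≤ ‖A u‖ * (Real.exp (L * t) - 1) := by
    intro t ht
    calc ‖A (f t) - A u‖ ≤ L * ‖f t - u‖ := hlipn t
      _ ≤ L * (‖A u‖ / L * (Real.exp (L * t) - 1)) :=
          mul_le_mul_of_nonneg_left (hg t ht) hLpos.le
      _ = ‖A u‖ * (Real.exp (L * t) - 1) := by field_simp
  have hexp_int : IntervalIntegrable (fun t => Real.exp (L * t)) MeasureTheory.volume 0 1 :=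
    (Real.continuous_exp.comp (continuous_const.mul continuous_id)).intervalIntegrable 0 1
  have hexp_val : (∫ t in (0:ℝ)..1, Real.exp (L * t)) = (Real.exp L - 1) / L := by
    have hd : ∀ t ∈ Set.uIcc (0:ℝ) 1,
        HasDerivAt (fun t => Real.exp (L * t) / L) (Real.exp (L * t)) t := by
      intro t _
      have := ((Real.hasDerivAt_exp (L * t)).comp t
        ((hasDerivAt_id t).const_mul (L : ℝ))).div_const (L : ℝ)
      simpa [mul_comm, mul_div_assoc, mul_div_cancel_left₀ _ hLne] using this
    rw [intervalIntegral.integral_eq_sub_of_hasDerivAt hd hexp_int]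
    rw [mul_one, mul_zero, Real.exp_zero]
    ring
  have hval : (∫ t in (0:ℝ)..1, ‖A u‖ * (Real.exp (L * t) - 1))
      = ‖A u‖ * (Real.exp L - 1 - L) / L := by
    rw [intervalIntegral.integral_const_mul,
      intervalIntegral.integral_sub hexp_int intervalIntegrable_const, hexp_val]
    simp only [intervalIntegral.integral_const, smul_eq_mul, sub_zero, mul_one]
    field_simp
  calc ‖∫ t in (0:ℝ)..1, (A (f t) - A u)‖
      ≤ |∫ t in (0:ℝ)..1, ‖A u‖ * (Real.exp (L * t) - 1)| := by
        apply intervalIntegral.norm_integral_le_abs_of_norm_le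
        · filter_upwards [MeasureTheory.ae_restrict_mem measurableSet_Ioc] with t ht
          rw [Set.uIoc_of_le zero_le_one] at ht
          exact hb t ⟨ht.1.le, ht.2⟩
        · exact (hexp_int.sub intervalIntegrable_const).const_mul _
    _ = ∫ t in (0:ℝ)..1, ‖A u‖ * (Real.exp (L * t) - 1) := by
        apply abs_of_nonneg
        apply intervalIntegral.integral_nonneg zero_le_one
        intro t ht
        have : (1:ℝ) ≤ Real.exp (L * t) := by
          rw [← Real.exp_zero]
          exact Real.exp_le_exp.2 (mul_nonneg hLpos.le ht.1)
        have := norm_nonneg (A u)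
        nlinarith
    _ = ‖A u‖ * (Real.exp L - 1 - L) / L := hval
end
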